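/- Let α ∈ (0,1) be irrational and suppose β ∈ (0,1) satisfies β = mα + n mod 1 for some integers m, n. Then the subshift Ω_{α,β} obtained from the coding of the rotation by α with respect to the partition [0,β), [β,1) satisfies the Boshernitzan condition. -/

import Mathlib

open MeasureTheory Filter Topology

noncomputable section

variable {A : Type*}

/-- The two-sided shift. -/
def shift (s : ℤ → A) : ℤ → A := fun n => s (n + 1)

/-- The two-sided orbit of `ω` under the shift. -/
def orbit (ω : ℤ → A) : Set (ℤ → A) := {ω' | ∃ m : ℤ, ω' = fun n => ω (n + m)}

/-- `Ω` is a subshift: nonempty, closed and shift-invariant. -/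
def IsSubshift [TopologicalSpace A] (Ω : Set (ℤ → A)) : Prop :=
  Ω.Nonempty ∧ IsClosed Ω ∧ (∀ ω ∈ Ω, shift ω ∈ Ω) ∧ (∀ ω, shift ω ∈ Ω → ω ∈ Ω)

/-- A subshift is minimal if every orbit is dense. -/
def IsMinimalSubshift [TopologicalSpace A] (Ω : Set (ℤ → A)) : Prop :=
  IsSubshift Ω ∧ ∀ ω ∈ Ω, Ω ⊆ closure (orbit ω)

/-- The set of (finite, nonempty) words occurring in elements of `Ω`. -/
def Words (Ω : Set (ℤ → A)) : Set (List A) :=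
  {w | w ≠ [] ∧ ∃ ω ∈ Ω, ∃ k : ℤ, ∀ i : Fin w.length, w.get i = ω (k + i)}

/-- The cylinder set `V_w` of all elements of `Ω` starting (at position 1) with `w`. -/
def Cyl (Ω : Set (ℤ → A)) (w : List A) : Set (ℤ → A) :=
  {ω ∈ Ω | ∀ i : Fin w.length, ω (1 + i) = w.get i}

/-- Boshernitzan's condition for a subshift. -/
def Boshernitzan [TopologicalSpace A] [MeasurableSpace A] (Ω : Set (ℤ → A)) : Prop :=
  IsMinimalSubshift Ω ∧
  ∃ ν : Measure (ℤ → A), IsProbabilityMeasure ν ∧ Ergodic shift ν ∧ ν Ωᶜ = 0 ∧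
    ∃ C > (0 : ℝ), ∃ l : ℕ → ℕ, Tendsto l atTop atTop ∧
      ∀ w ∈ Words Ω, (∃ n, w.length = l n) → C ≤ w.length * (ν (Cyl Ω w)).toReal

/-- `f` is locally constant on `Ω`. -/
def LocallyConstantOn (Ω : Set (ℤ → A)) {B : Type*} (f : (ℤ → A) → B) : Prop :=
  ∃ N : ℕ, ∀ ω ∈ Ω, ∀ ω' ∈ Ω, (∀ j : ℤ, |j| ≤ (N : ℤ) → ω j = ω' j) → f ω = f ω'

attribute [local instance] Matrix.frobeniusNormedAddCommGroup

/-- The coding of the rotation by `α` with respect to the partition `[0,β), [β,1)`: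
`rotCoding α β θ n = 1` iff `θ + nα mod 1 ∈ [0,β)`. -/
def rotCoding (α β : ℝ) (θ : ℝ) : ℤ → Fin 2 :=
  fun n => if Int.fract (θ + n * α) < β then 1 else 0

/-- The subshift generated by the coding of the rotation by `α` with respect to the
partition `[0,β), [β,1)`. -/
def rotSubshift (α β : ℝ) : Set (ℤ → Fin 2) :=
  closure {s | ∃ θ ∈ Set.Ico (0 : ℝ) 1, s = rotCoding α β θ}


namespace RotBosh

open Set

/-! ### Arithmetic of `Int.fract` and the coding bit -/

/-- The coding bit of a real number. -/
def wc (β x : ℝ) : Fin 2 := if Int.fract x < β then 1 else 0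

lemma rotCoding_eq (α β θ : ℝ) (n : ℤ) : rotCoding α β θ n = wc β (θ + n * α) := rfl

lemma wc_congr {x y : ℝ} (β : ℝ) (h : Int.fract x = Int.fract y) : wc β x = wc β y := by
  simp only [wc, h]

lemma fract_shift (x y : ℝ) : Int.fract (Int.fract x + y) = Int.fract (x + y) := by
  have h : Int.fract x + y = x + y - (⌊x⌋ : ℤ) := by rw [Int.fract]; ring
  rw [h, Int.fract_sub_intCast]

lemma wc_int (β x : ℝ) (k : ℤ) : wc β (x + k) = wc β x :=
  wc_congr β (Int.fract_add_intCast x k)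

/-! ### Window stability -/

/-- If `t` stays away from all the "cut points" of the window `F`, then the codes of
`θ + t` and `θ` agree on the window `F`. -/
lemma window_stable {α β : ℝ} {m k : ℤ} (hβm : β = Int.fract (m * α + k))
    (hβ0 : 0 < β) (hβ1 : β < 1) (F : Finset ℤ) {θ t : ℝ}
    (h1 : ∀ j ∈ F, -(Int.fract (θ + j * α)) ≤ t ∧ t < 1 - Int.fract (θ + j * α))
    (h2 : ∀ j ∈ F, -(Int.fract (θ + (j - m) * α)) ≤ t ∧ t < 1 - Int.fract (θ + (j - m) * α)) :
    ∀ i ∈ F, wc β (θ + t + i * α) = wc β (θ + i * α) := by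
  intro i hi
  obtain ⟨h1l, h1r⟩ := h1 i hi
  obtain ⟨h2l, h2r⟩ := h2 i hi
  set f := Int.fract (θ + i * α) with hf
  have hf0 : 0 ≤ f := Int.fract_nonneg _
  have hf1 : f < 1 := Int.fract_lt_one _
  have hfr : Int.fract (θ + t + i * α) = f + t := by
    have e1 : θ + t + i * α = Int.fract (θ + i * α) + t + (⌊θ + (i:ℝ) * α⌋ : ℤ) := by
      rw [Int.fract]; push_cast; ring
    rw [e1, Int.fract_add_intCast]
    rw [← hf]
    exact Int.fract_eq_self.mpr ⟨by linarith, by linarith⟩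
  have hβ' : Int.fract (θ + ((i:ℝ) - (m:ℝ)) * α) = Int.fract (f - β) := by
    have e2 : θ + ((i:ℝ) - (m:ℝ)) * α
        = (f - β) + ((⌊θ + (i:ℝ)*α⌋ - ⌊m * α + (k:ℝ)⌋ + k : ℤ) : ℝ) := by
      rw [hf, hβm, Int.fract, Int.fract]; push_cast; ring
    rw [e2, Int.fract_add_intCast]
  by_cases hc : f < β
  · -- both bits are 1
    have hfloor : ⌊f - β⌋ = (-1 : ℤ) := by
      rw [Int.floor_eq_iff]
      constructor
      · push_cast; linarith
      · push_cast; linarith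
    have hfb : Int.fract (f - β) = f - β + 1 := by
      rw [Int.fract, hfloor]; push_cast; ring
    have ht' : t < β - f := by
      have := h2r; rw [hβ', hfb] at this; linarith
    simp only [wc, hfr]
    rw [if_pos (by linarith : f + t < β), if_pos hc]
  · -- both bits are 0
    push_neg at hc
    have hfb : Int.fract (f - β) = f - β :=
      Int.fract_eq_self.mpr ⟨by linarith, by linarith⟩
    have ht' : β - f ≤ t := by
      have := h2l; rw [hβ', hfb] at this; linarith
    simp only [wc, hfr]
    rw [if_neg (by linarith : ¬ f + t < β), if_neg (by linarith : ¬ f < β)]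

/-! ### The quantity `nrm` (distance of `d•α` to `ℤ`) and `eps` -/

/-- Distance from `d * α` to the nearest integer. -/
def nrm (α : ℝ) (d : ℤ) : ℝ := min (Int.fract (d * α)) (1 - Int.fract (d * α))

lemma Icc_ne (N : ℕ) : (Finset.Icc (1:ℤ) ((N:ℤ)+1)).Nonempty :=
  ⟨1, Finset.mem_Icc.mpr ⟨le_refl _, by omega⟩⟩

/-- Minimum of `nrm α d` over `1 ≤ d ≤ N + 1`. -/
def eps (α : ℝ) (N : ℕ) : ℝ := (Finset.Icc (1:ℤ) ((N:ℤ)+1)).inf' (Icc_ne N) (nrm α)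

lemma fract_pos (hirr : Irrational α) {d : ℤ} (hd : d ≠ 0) : 0 < Int.fract ((d:ℝ) * α) := by
  rcases (Int.fract_nonneg ((d:ℝ) * α)).lt_or_eq with h | h
  · exact h
  · exfalso
    have : (d:ℝ) * α = (⌊(d:ℝ) * α⌋ : ℤ) := by
      have := Int.self_sub_floor ((d:ℝ) * α)
      rw [← h] at this; linarith
    exact (hirr.intCast_mul hd).ne_int _ this

lemma nrm_pos (hirr : Irrational α) {d : ℤ} (hd : d ≠ 0) : 0 < nrm α d :=
  lt_min (fract_pos hirr hd) (by linarith [Int.fract_lt_one ((d:ℝ) * α)])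

lemma nrm_le_one (α : ℝ) (d : ℤ) : nrm α d ≤ 1 :=
  (min_le_right _ _).trans (by linarith [Int.fract_nonneg ((d:ℝ) * α)])

lemma nrm_le_half (α : ℝ) (d : ℤ) : nrm α d ≤ 1/2 := by
  rcases le_total (Int.fract ((d:ℝ) * α)) (1 - Int.fract ((d:ℝ) * α)) with h | h
  · rw [nrm, min_eq_left h]; linarith
  · rw [nrm, min_eq_right h]; linarith

lemma nrm_neg (hirr : Irrational α) (d : ℤ) : nrm α (-d) = nrm α d := by
  rcases eq_or_ne d 0 with rfl | hd
  · simp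
  · have h0 : Int.fract ((d:ℝ) * α) ≠ 0 := ne_of_gt (fract_pos hirr hd)
    have : ((-d : ℤ) : ℝ) * α = -((d:ℝ) * α) := by push_cast; ring
    rw [nrm, this, Int.fract_neg h0, nrm]
    rw [show 1 - (1 - Int.fract ((d:ℝ)*α)) = Int.fract ((d:ℝ)*α) by ring, min_comm]

lemma nrm_le_abs (α : ℝ) (d q : ℤ) : nrm α d ≤ |(d:ℝ) * α - q| := by
  have h1 : nrm α d = min (Int.fract ((d:ℝ) * α - q)) (1 - Int.fract ((d:ℝ) * α - q)) := by
    rw [nrm, Int.fract_sub_intCast]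
  rw [h1]
  set z := (d:ℝ) * α - q with hz
  rcases le_or_gt 0 z with h | h
  · have : Int.fract z ≤ z := by
      have := Int.self_sub_floor z
      have hfl : (0:ℤ) ≤ ⌊z⌋ := Int.floor_nonneg.mpr h
      have : (0:ℝ) ≤ (⌊z⌋ : ℤ) := by exact_mod_cast hfl
      rw [Int.fract]; linarith
    calc min (Int.fract z) (1 - Int.fract z) ≤ Int.fract z := min_le_left _ _
    _ ≤ z := this
    _ ≤ |z| := le_abs_self z
  · have hfl : ⌊z⌋ ≤ -1 := by
      have : ⌊z⌋ < 0 := Int.floor_lt.mpr (by exact_mod_cast h)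
      omega
    have hfl' : ((⌊z⌋:ℤ):ℝ) ≤ -1 := by exact_mod_cast hfl
    have : 1 - Int.fract z ≤ -z := by rw [Int.fract]; linarith
    calc min (Int.fract z) (1 - Int.fract z) ≤ 1 - Int.fract z := min_le_right _ _
    _ ≤ -z := this
    _ ≤ |z| := neg_le_abs z

lemma eps_pos (hirr : Irrational α) (N : ℕ) : 0 < eps α N := by
  obtain ⟨d, hd, he⟩ := Finset.exists_mem_eq_inf' (Icc_ne N) (nrm α)
  rw [eps, he]
  rw [Finset.mem_Icc] at hd
  exact nrm_pos hirr (by omega)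

lemma eps_le_one (α : ℝ) (N : ℕ) : eps α N ≤ 1 :=
  (Finset.inf'_le _ (Finset.mem_Icc.mpr ⟨le_refl _, by omega⟩ : (1:ℤ) ∈ _)).trans (nrm_le_one α 1)

lemma eps_le_half (α : ℝ) (N : ℕ) : eps α N ≤ 1/2 :=
  (Finset.inf'_le _ (Finset.mem_Icc.mpr ⟨le_refl _, by omega⟩ : (1:ℤ) ∈ _)).trans (nrm_le_half α 1)

/-- The key "gap" lower bound: on the circle, points `θ + j₁ α` and `θ + j₂ α` cannot get
closer (in the appropriate one-sided sense) than `eps α N` when `|j₁ - j₂| ≤ N + 1`. -/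
lemma gap_lb {α : ℝ} (hirr : Irrational α) (N : ℕ) {j₁ j₂ : ℤ}
    (hj : |j₁ - j₂| ≤ (N:ℤ)+1) (θ : ℝ) :
    eps α N ≤ Int.fract (θ + j₁ * α) + (1 - Int.fract (θ + j₂ * α)) := by
  by_cases he : j₁ = j₂
  · subst he
    have := eps_le_one α N
    linarith
  · set d := j₁ - j₂ with hd
    have hdne : d ≠ 0 := sub_ne_zero.mpr he
    set S := Int.fract (θ + j₁ * α) + (1 - Int.fract (θ + j₂ * α)) with hS
    set zz : ℤ := ⌊θ + (j₂:ℝ) * α⌋ + ⌊(d:ℝ) * α⌋ - ⌊θ + (j₁:ℝ) * α⌋ + 1 with hzz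
    have key : S - Int.fract ((d:ℝ) * α) = (zz : ℝ) := by
      rw [hS, hzz, Int.fract, Int.fract, Int.fract, hd]
      push_cast
      ring
    have hzznn : (0:ℝ) ≤ (zz : ℝ) := by
      have h1 : (-1:ℝ) < (zz:ℝ) := by
        rw [← key]
        have := Int.fract_nonneg (θ + (j₁:ℝ) * α)
        have := Int.fract_lt_one (θ + (j₂:ℝ) * α)
        have := Int.fract_lt_one ((d:ℝ) * α)
        simp only [hS]
        linarith
      have h2 : (-1:ℤ) < zz := by exact_mod_cast h1
      have h3 : (0:ℤ) ≤ zz := by omega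
      exact_mod_cast h3
    have hfS : Int.fract ((d:ℝ) * α) ≤ S := by linarith [key]
    have habs : nrm α d ≤ Int.fract ((d:ℝ) * α) := min_le_left _ _
    rw [abs_le] at hj
    obtain ⟨hja, hjb⟩ := hj
    rcases lt_or_gt_of_ne hdne with hneg | hpos
    · have hmem : -d ∈ Finset.Icc (1:ℤ) ((N:ℤ)+1) := by
        rw [Finset.mem_Icc]
        omega
      calc eps α N ≤ nrm α (-d) := Finset.inf'_le _ hmem
      _ = nrm α d := nrm_neg hirr d
      _ ≤ Int.fract ((d:ℝ) * α) := habs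
      _ ≤ S := hfS
    · have hmem : d ∈ Finset.Icc (1:ℤ) ((N:ℤ)+1) := by
        rw [Finset.mem_Icc]
        omega
      calc eps α N ≤ nrm α d := Finset.inf'_le _ hmem
      _ ≤ Int.fract ((d:ℝ) * α) := habs
      _ ≤ S := hfS

/-! ### Density of `ℤα + ℤ` -/

lemma exists_in_Ioo {α : ℝ} (hirr : Irrational α) {a b : ℝ} (hab : a < b) :
    ∃ c q : ℤ, a < c * α + q ∧ c * α + q < b := by
  rcases AddSubgroup.dense_or_cyclic (AddSubgroup.closure {α, (1:ℝ)}) with hd | ⟨g, hg⟩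
  · obtain ⟨x, hx1, hx2⟩ :=
      hd.inter_open_nonempty (Ioo a b) isOpen_Ioo ⟨(a+b)/2, by constructor <;> linarith⟩
    obtain ⟨c, q, hcq⟩ := AddSubgroup.mem_closure_pair.mp hx2
    refine ⟨c, q, ?_, ?_⟩
    · rw [zsmul_eq_mul, zsmul_eq_mul, mul_one] at hcq
      rw [hcq]; exact hx1.1
    · rw [zsmul_eq_mul, zsmul_eq_mul, mul_one] at hcq
      rw [hcq]; exact hx1.2
  · exfalso
    have hα : α ∈ AddSubgroup.closure {α, (1:ℝ)} :=
      AddSubgroup.subset_closure (by simp)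
    have h1 : (1:ℝ) ∈ AddSubgroup.closure {α, (1:ℝ)} :=
      AddSubgroup.subset_closure (by simp)
    rw [hg] at hα h1
    obtain ⟨s, hs⟩ := AddSubgroup.mem_closure_singleton.mp hα
    obtain ⟨tt, ht⟩ := AddSubgroup.mem_closure_singleton.mp h1
    have htne : tt ≠ 0 := by
      rintro rfl; simp at ht
    have htR : (tt:ℝ) ≠ 0 := Int.cast_ne_zero.mpr htne
    rw [zsmul_eq_mul] at hs ht
    apply hirr
    refine ⟨(s : ℚ) / (tt : ℚ), ?_⟩
    have hgv : g = 1 / (tt:ℝ) := by field_simp at ht ⊢; linarith [ht]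
    rw [hgv] at hs
    push_cast
    rw [← hs]; ring

lemma exists_small {α : ℝ} (hirr : Irrational α) {e : ℝ} (he : 0 < e) (he1 : e < 1) :
    ∃ d : ℕ, 1 ≤ d ∧ nrm α d < e := by
  obtain ⟨c, q, h1, h2⟩ := exists_in_Ioo hirr he
  have hc : c ≠ 0 := by
    rintro rfl
    simp only [Int.cast_zero, zero_mul, zero_add] at h1 h2
    have hq1 : (0:ℤ) < q := by exact_mod_cast h1
    have hq2 : (q:ℝ) < 1 := by linarith
    have : q < 1 := by exact_mod_cast hq2
    omega
  have hle : nrm α c ≤ |(c:ℝ) * α - (-q : ℤ)| := nrm_le_abs α c (-q)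
  have habs : |(c:ℝ) * α - (-q:ℤ)| = c * α + q := by
    rw [abs_of_pos]; push_cast; ring
    push_cast; linarith
  refine ⟨c.natAbs, by omega, ?_⟩
  have : nrm α (c.natAbs : ℤ) = nrm α c := by
    rcases Int.natAbs_eq c with h | h
    · rw [← h]
    · rw [show ((c.natAbs : ℤ) : ℤ) = -c by omega, nrm_neg hirr]
  rw [this]
  calc nrm α c ≤ |(c:ℝ) * α - (-q:ℤ)| := hle
  _ = c * α + q := habs
  _ < e := h2

/-! ### The diophantine lemma (via consecutive best approximations) -/

set_option maxHeartbeats 1000000 in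
lemma dioph {α : ℝ} (hirr : Irrational α) (M : ℕ) :
    ∃ N : ℕ, M ≤ N ∧ 1 / (2 * ((N:ℝ) + 2)) ≤ eps α N := by
  set e := eps α M with hedef
  have he0 : 0 < e := eps_pos hirr M
  have hehalf : e ≤ 1/2 := eps_le_half α M
  obtain ⟨k₀, hk₀1, hk₀⟩ := exists_small hirr he0 (by linarith)
  have hex : ∃ j : ℕ, nrm α ((j:ℤ) + 1) < e := by
    refine ⟨k₀ - 1, ?_⟩
    have : ((k₀ - 1 : ℕ) : ℤ) + 1 = (k₀ : ℤ) := by omega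
    rw [this]; exact hk₀
  classical
  obtain ⟨j₀, hj₀spec, hj₀min⟩ : ∃ j₀ : ℕ, nrm α ((j₀:ℤ) + 1) < e ∧
      ∀ j < j₀, ¬ nrm α ((j:ℤ) + 1) < e :=
    ⟨Nat.find hex, Nat.find_spec hex, fun j hj => Nat.find_min hex hj⟩
  set d' : ℤ := (j₀ : ℤ) + 1 with hd'
  have hd'spec : nrm α d' < e := hj₀spec
  have hd'pos : 1 ≤ d' := by omega
  have hmin : ∀ dd : ℤ, 1 ≤ dd → dd < d' → e ≤ nrm α dd := by
    intro dd h1 h2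
    by_contra hcon
    push_neg at hcon
    have hddn : (dd.toNat - 1) < j₀ := by omega
    exact hj₀min _ hddn (by
      have h3 : ((dd.toNat - 1 : ℕ) : ℤ) + 1 = dd := by omega
      rw [h3]; exact hcon)
  have hd'M : (M:ℤ) + 1 < d' := by
    by_contra hcon
    push_neg at hcon
    have : e ≤ nrm α d' :=
      Finset.inf'_le _ (Finset.mem_Icc.mpr ⟨hd'pos, hcon⟩)
    linarith
  -- the attained minimum
  obtain ⟨d₀, hd₀mem, hd₀⟩ := Finset.exists_mem_eq_inf' (Icc_ne M) (nrm α)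
  have hd₀' : e = nrm α d₀ := hd₀
  rw [Finset.mem_Icc] at hd₀mem
  have hd₀lt : d₀ < d' := by omega
  -- best approximation data
  set x : ℝ := (d₀:ℝ) * α - (round ((d₀:ℝ) * α) : ℤ) with hx
  set y : ℝ := (d':ℝ) * α - (round ((d':ℝ) * α) : ℤ) with hy
  have hxabs : |x| = e := by
    rw [hx, abs_sub_round_eq_min, hd₀']; rfl
  have hyabs : |y| = nrm α d' := by
    rw [hy, abs_sub_round_eq_min]; rfl
  have hx0 : x ≠ 0 := by
    intro h0; rw [h0, abs_zero] at hxabs; linarith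
  have hy0 : y ≠ 0 := by
    intro h0; rw [h0, abs_zero] at hyabs
    exact absurd hyabs.symm (ne_of_gt (nrm_pos hirr (by omega)))
  -- core inequality: e ≥ 1/(2 d')
  have hcore : 1 / (2 * (d' : ℝ)) ≤ e := by
    rcases lt_trichotomy (x * y) 0 with hsgn | hsgn | hsgn
    · -- opposite signs: determinant argument
      set A : ℝ := (d':ℝ) * x - (d₀:ℝ) * y with hA
      have hAint : A = ((d₀ * round ((d':ℝ) * α) - d' * round ((d₀:ℝ) * α) : ℤ) : ℝ) := by
        rw [hA, hx, hy]; push_cast; ring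
      have hApos : A ≠ 0 := by
        rcases mul_neg_iff.mp hsgn with ⟨hxp, hyn⟩ | ⟨hxn, hyp⟩
        · have : 0 < A := by
            rw [hA]
            have h1 : (0:ℝ) < (d':ℝ) := by exact_mod_cast hd'pos
            have h2 : (0:ℝ) < (d₀:ℝ) := by exact_mod_cast hd₀mem.1
            nlinarith
          linarith
        · have : A < 0 := by
            rw [hA]
            have h1 : (0:ℝ) < (d':ℝ) := by exact_mod_cast hd'pos
            have h2 : (0:ℝ) < (d₀:ℝ) := by exact_mod_cast hd₀mem.1
            nlinarith
          linarith
      have hA1 : 1 ≤ |A| := by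
        rw [hAint]
        rw [hAint] at hApos
        have hz : (d₀ * round ((d':ℝ) * α) - d' * round ((d₀:ℝ) * α) : ℤ) ≠ 0 := by
          intro hcon; rw [hcon] at hApos; simp at hApos
        have h1 : 1 ≤ |(d₀ * round ((d':ℝ) * α) - d' * round ((d₀:ℝ) * α) : ℤ)| :=
          Int.one_le_abs hz
        rw [← Int.cast_abs]
        exact_mod_cast h1
      have hAle : |A| ≤ 2 * (d':ℝ) * e := by
        have h1 : (0:ℝ) < (d':ℝ) := by exact_mod_cast hd'pos
        have h2 : (0:ℝ) ≤ (d₀:ℝ) := by exact_mod_cast (by omega : (0:ℤ) ≤ d₀)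
        have h3 : (d₀:ℝ) ≤ (d':ℝ) := by exact_mod_cast le_of_lt hd₀lt
        have h4 : |y| ≤ e := by rw [hyabs]; linarith
        calc |A| ≤ |(d':ℝ) * x| + |(d₀:ℝ) * y| := abs_sub _ _
        _ = (d':ℝ) * |x| + (d₀:ℝ) * |y| := by
            rw [abs_mul, abs_mul, abs_of_pos h1, abs_of_nonneg h2]
        _ ≤ (d':ℝ) * e + (d':ℝ) * e := by
            rw [hxabs]
            have := abs_nonneg y
            nlinarith
        _ = 2 * (d':ℝ) * e := by ring
      have h1 : (0:ℝ) < (d':ℝ) := by exact_mod_cast hd'pos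
      rw [div_le_iff₀ (by linarith : (0:ℝ) < 2 * (d':ℝ))]
      nlinarith
    · exact absurd hsgn (mul_ne_zero hx0 hy0)
    · -- same signs: contradiction with minimality
      exfalso
      have hdd1 : 1 ≤ d' - d₀ := by omega
      have hdd2 : d' - d₀ < d' := by omega
      have hle : nrm α (d' - d₀) ≤
          |((d' - d₀ : ℤ) : ℝ) * α - ((round ((d':ℝ) * α) - round ((d₀:ℝ) * α) : ℤ) : ℝ)| :=
        nrm_le_abs α _ _
      have heq : ((d' - d₀ : ℤ) : ℝ) * α - ((round ((d':ℝ) * α) - round ((d₀:ℝ) * α) : ℤ) : ℝ)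
          = y - x := by
        rw [hx, hy]; push_cast; ring
      rw [heq] at hle
      have hylt : |y| < e := by rw [hyabs]; exact hd'spec
      have hyx : |y - x| < e := by
        rcases mul_pos_iff.mp hsgn with ⟨hxp, hyp⟩ | ⟨hxn, hyn⟩
        · rw [abs_of_pos hxp] at hxabs
          rw [abs_of_pos hyp] at hylt
          rw [abs_lt]; constructor <;> nlinarith
        · rw [abs_of_neg hxn] at hxabs
          rw [abs_of_neg hyn] at hylt
          rw [abs_lt]; constructor <;> nlinarith
      have := hmin (d' - d₀) hdd1 hdd2
      linarith
  -- conclude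
  refine ⟨j₀ - 1, by omega, ?_⟩
  have hj₀1 : 1 ≤ j₀ := by omega
  have hcast : ((j₀ - 1 : ℕ) : ℝ) + 2 = (d' : ℝ) := by
    rw [hd']; push_cast [Nat.cast_sub hj₀1]; ring
  rw [hcast]
  apply Finset.le_inf'
  intro dd hdd
  rw [Finset.mem_Icc] at hdd
  have h1 : 1 ≤ dd := hdd.1
  have h2 : dd < d' := by
    have := hdd.2
    omega
  exact le_trans hcore (hmin dd h1 h2)

/-! ### Closure in the product space via finite windows -/

lemma mem_closure_windows {S : Set (ℤ → Fin 2)} {x : ℤ → Fin 2} :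
    x ∈ closure S ↔ ∀ K : ℕ, ∃ s ∈ S, ∀ n : ℤ, |n| ≤ (K:ℤ) → s n = x n := by
  constructor
  · intro hx K
    set U : Set (ℤ → Fin 2) := {y | ∀ n ∈ Finset.Icc (-(K:ℤ)) (K:ℤ), y n = x n} with hUdef
    have hU : IsOpen U := by
      have h : U = ⋂ n ∈ Finset.Icc (-(K:ℤ)) (K:ℤ), (fun y : ℤ → Fin 2 => y n) ⁻¹' {x n} := by
        ext y; simp [hUdef]
      rw [h]
      exact isOpen_biInter_finset fun n _ =>
        (continuous_apply n).isOpen_preimage _ (isOpen_discrete _)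
    have hxU : x ∈ U := fun n _ => rfl
    obtain ⟨y, hyU, hyS⟩ := mem_closure_iff.mp hx U hU hxU
    exact ⟨y, hyS, fun n hn => hyU n (Finset.mem_Icc.mpr (abs_le.mp hn))⟩
  · intro h
    rw [mem_closure_iff]
    intro U hU hxU
    obtain ⟨I, u, hu, hsub⟩ := isOpen_pi_iff.mp hU x hxU
    obtain ⟨s, hsS, hs⟩ := h (I.sup (fun n => n.natAbs))
    refine ⟨s, hsub fun i hi => ?_, hsS⟩
    have hle : |i| ≤ ((I.sup (fun n => n.natAbs) : ℕ) : ℤ) := by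
      rw [Int.abs_eq_natAbs]
      exact_mod_cast Finset.le_sup (f := fun n : ℤ => n.natAbs) hi
    rw [hs i hle]
    exact (hu i hi).2

lemma window_of_mem {α β : ℝ} {ω : ℤ → Fin 2} (hω : ω ∈ rotSubshift α β) (K : ℕ) :
    ∃ θ : ℝ, ∀ n : ℤ, |n| ≤ (K:ℤ) → ω n = wc β (θ + n * α) := by
  obtain ⟨s, hsS, hs⟩ := mem_closure_windows.mp hω K
  obtain ⟨θ, _, rfl⟩ := hsS
  exact ⟨θ, fun n hn => (hs n hn).symm⟩

/-! ### The stable interval around a point -/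

lemma stable_interval {α β : ℝ} {m k : ℤ} (hβm : β = Int.fract (m * α + k))
    (hβ0 : 0 < β) (hβ1 : β < 1) (hirr : Irrational α)
    (F : Finset ℤ) (hF : F.Nonempty) (θ : ℝ) (N B : ℕ)
    (hFB : ∀ j ∈ F, |j| ≤ (B:ℤ)) (hNB : 2*(B:ℤ) + 2*|m| ≤ (N:ℤ)+1) :
    ∃ s T : ℝ, 0 ≤ s ∧ 0 < T ∧ eps α N ≤ s + T ∧
      ∀ t : ℝ, -s < t → t < T → ∀ i ∈ F, wc β (θ + t + i * α) = wc β (θ + i * α) := by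
  classical
  set J : Finset ℤ := F ∪ F.image (fun j => j - m) with hJdef
  have hJne : J.Nonempty := Finset.Nonempty.mono Finset.subset_union_left hF
  have hJbound : ∀ j ∈ J, |j| ≤ (B:ℤ) + |m| := by
    intro j hj
    rw [hJdef, Finset.mem_union] at hj
    rcases hj with hj | hj
    · have := hFB j hj
      have : (0:ℤ) ≤ |m| := abs_nonneg m
      omega
    · obtain ⟨j', hj', rfl⟩ := Finset.mem_image.mp hj
      have h1 := hFB j' hj'
      calc |j' - m| ≤ |j'| + |m| := abs_sub _ _
      _ ≤ (B:ℤ) + |m| := by omega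
  set s := J.inf' hJne (fun j => Int.fract (θ + j * α)) with hsdef
  set T := J.inf' hJne (fun j => 1 - Int.fract (θ + j * α)) with hTdef
  have hs0 : 0 ≤ s := Finset.le_inf' hJne _ fun j _ => Int.fract_nonneg _
  have hT0 : 0 < T := by
    rw [hTdef, Finset.lt_inf'_iff]
    exact fun j _ => by linarith [Int.fract_lt_one (θ + (j:ℝ) * α)]
  refine ⟨s, T, hs0, hT0, ?_, ?_⟩
  · -- length bound
    obtain ⟨j₁, hj₁, hs1⟩ := Finset.exists_mem_eq_inf' hJne (fun j => Int.fract (θ + j * α))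
    obtain ⟨j₂, hj₂, hT2⟩ := Finset.exists_mem_eq_inf' hJne (fun j => 1 - Int.fract (θ + j * α))
    have hjj : |j₁ - j₂| ≤ (N:ℤ) + 1 := by
      have h1 := hJbound j₁ hj₁
      have h2 := hJbound j₂ hj₂
      have : |j₁ - j₂| ≤ |j₁| + |j₂| := abs_sub _ _
      omega
    have := gap_lb hirr N hjj θ
    rw [hsdef, hTdef, hs1, hT2]
    linarith
  · -- stability
    intro t hts htT
    apply window_stable hβm hβ0 hβ1 F
    · intro j hj
      have hmem : j ∈ J := Finset.mem_union_left _ hj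
      constructor
      · have : s ≤ Int.fract (θ + j * α) := Finset.inf'_le _ hmem
        linarith
      · have : T ≤ 1 - Int.fract (θ + j * α) := Finset.inf'_le _ hmem
        linarith
    · intro j hj
      have hmem : j - m ∈ J :=
        Finset.mem_union_right _ (Finset.mem_image.mpr ⟨j, hj, rfl⟩)
      have e1 : θ + ((j:ℝ) - (m:ℝ)) * α = θ + ((j - m : ℤ) : ℝ) * α := by push_cast; ring
      constructor
      · have : s ≤ Int.fract (θ + ((j - m : ℤ):ℝ) * α) := Finset.inf'_le _ hmem
        rw [e1]; linarith
      · have : T ≤ 1 - Int.fract (θ + ((j - m : ℤ):ℝ) * α) := Finset.inf'_le _ hmem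
        rw [e1]; linarith

/-! ### Uniform recurrence -/

lemma exists_unif {α : ℝ} (hirr : Irrational α) (θ' T : ℝ) (hT0 : 0 < T) (hT1 : T ≤ 1) :
    ∃ M : ℕ, ∀ ψ : ℝ, ∃ c : ℤ, |c| ≤ (M:ℤ) ∧ Int.fract (ψ + c * α - θ') ∈ Ioo 0 T := by
  classical
  have hop : IsOpen {x : ℝ | Int.fract x ∈ Ioo 0 T} := by
    have h : {x : ℝ | Int.fract x ∈ Ioo 0 T} = ⋃ kk : ℤ, Ioo (kk:ℝ) ((kk:ℝ) + T) := by
      ext x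
      simp only [mem_setOf_eq, mem_iUnion, mem_Ioo]
      constructor
      · rintro ⟨hx1, hx2⟩
        refine ⟨⌊x⌋, ?_, ?_⟩
        · have := Int.self_sub_floor x; rw [Int.fract] at hx1; linarith
        · rw [Int.fract] at hx2; linarith
      · rintro ⟨kk, hk1, hk2⟩
        have hfl : ⌊x⌋ = kk := by
          rw [Int.floor_eq_iff]
          exact ⟨le_of_lt hk1, by push_cast; linarith⟩
        rw [Int.fract, hfl]
        constructor
        · linarith
        · linarith
    rw [h]
    exact isOpen_iUnion fun kk => isOpen_Ioo
  set Uc : ℤ → Set ℝ := fun c => (fun ψ : ℝ => ψ + (c * α - θ')) ⁻¹' {x | Int.fract x ∈ Ioo 0 T}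
    with hUc
  have hUo : ∀ c, IsOpen (Uc c) := fun c =>
    hop.preimage (continuous_id.add continuous_const)
  have hcov : Icc (0:ℝ) 1 ⊆ ⋃ c : ℤ, Uc c := by
    intro ψ _
    obtain ⟨c, q, h1, h2⟩ := exists_in_Ioo hirr (show θ' - ψ < θ' - ψ + T by linarith)
    refine mem_iUnion.mpr ⟨c, ?_⟩
    show Int.fract (ψ + ((c:ℝ) * α - θ')) ∈ Ioo 0 T
    have e1 : ψ + ((c:ℝ) * α - θ') = (ψ + ((c:ℝ) * α + q) - θ') - (q:ℤ) := by push_cast; ring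
    rw [e1, Int.fract_sub_intCast]
    have hv1 : 0 < ψ + ((c:ℝ) * α + q) - θ' := by linarith
    have hv2 : ψ + ((c:ℝ) * α + q) - θ' < T := by linarith
    rw [Int.fract_eq_self.mpr ⟨le_of_lt hv1, by linarith⟩]
    exact ⟨hv1, hv2⟩
  obtain ⟨tt, htt⟩ := isCompact_Icc.elim_finite_subcover Uc hUo hcov
  refine ⟨tt.sup Int.natAbs, fun ψ => ?_⟩
  have hψ : Int.fract ψ ∈ Icc (0:ℝ) 1 := ⟨Int.fract_nonneg _, (Int.fract_lt_one _).le⟩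
  obtain ⟨c, hctt, hcU⟩ := mem_iUnion₂.mp (htt hψ)
  refine ⟨c, ?_, ?_⟩
  · rw [Int.abs_eq_natAbs]
    exact_mod_cast Finset.le_sup (f := Int.natAbs) hctt
  · have e2 : Int.fract (ψ + c * α - θ') = Int.fract (Int.fract ψ + ((c:ℝ) * α - θ')) := by
      rw [fract_shift]
      congr 1
      ring
    rw [e2]
    exact hcU

/-! ### The factor map `Φ` from the circle and the measure `ν` -/

/-- The coding factor map from the circle to the shift space. -/
def Phi (α β : ℝ) : AddCircle (1:ℝ) → (ℤ → Fin 2) :=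
  fun x => rotCoding α β ((AddCircle.equivIco 1 0 x : ℝ))

lemma Phi_coe (α β : ℝ) (ψ : ℝ) (n : ℤ) : Phi α β (ψ : AddCircle (1:ℝ)) n = wc β (ψ + n * α) := by
  show wc β (((AddCircle.equivIco 1 0 ((ψ : ℝ) : AddCircle (1:ℝ))) : ℝ) + n * α) = _
  apply wc_congr
  have h : ((AddCircle.equivIco 1 0 ((ψ:ℝ) : AddCircle (1:ℝ))) : ℝ) = Int.fract ψ := by
    simpa using AddCircle.coe_equivIco_mk_apply 1 ψ
  rw [h, fract_shift]

lemma Phi_mem (α β : ℝ) (x : AddCircle (1:ℝ)) : Phi α β x ∈ rotSubshift α β := by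
  apply subset_closure
  refine ⟨((AddCircle.equivIco 1 0 x : ℝ)), ?_, rfl⟩
  have h2 := (AddCircle.equivIco 1 0 x).2
  exact ⟨h2.1, by have := h2.2; linarith⟩

lemma Phi_meas (α β : ℝ) : Measurable (Phi α β) := by
  apply measurable_pi_lambda
  intro n
  have hrep : Measurable (fun x : AddCircle (1:ℝ) => ((AddCircle.equivIco 1 0 x : ℝ))) := by
    have : (fun x : AddCircle (1:ℝ) => ((AddCircle.equivIco 1 0 x : ℝ)))
        = fun x => ((AddCircle.measurableEquivIco 1 0 x : ℝ)) := rfl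
    rw [this]
    exact measurable_subtype_coe.comp (AddCircle.measurableEquivIco 1 0).measurable
  have hwc : Measurable (fun θ : ℝ => wc β (θ + n * α)) := by
    have hset : MeasurableSet {θ : ℝ | Int.fract (θ + n * α) < β} := by
      have hf : Measurable (fun θ : ℝ => Int.fract (θ + n * α)) :=
        measurable_fract.comp (measurable_add_const _)
      exact measurableSet_lt hf measurable_const
    exact Measurable.ite hset measurable_const measurable_const
  exact hwc.comp hrep

lemma Phi_shift (α β : ℝ) (x : AddCircle (1:ℝ)) :
    Phi α β (((α:ℝ) : AddCircle (1:ℝ)) + x) = shift (Phi α β x) := by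
  obtain ⟨ψ, rfl⟩ := QuotientAddGroup.mk_surjective x
  funext n
  have h1 : ((α:ℝ) : AddCircle (1:ℝ)) + (ψ : AddCircle (1:ℝ)) = ((α + ψ : ℝ) : AddCircle (1:ℝ)) := by
    norm_cast
  rw [h1, Phi_coe]
  show _ = Phi α β (ψ : AddCircle (1:ℝ)) (n + 1)
  rw [Phi_coe]
  apply wc_congr
  congr 1
  push_cast
  ring

/-- The invariant measure: pushforward of Haar measure on the circle. -/
def nu (α β : ℝ) : Measure (ℤ → Fin 2) := Measure.map (Phi α β) volume

instance volume_prob : IsProbabilityMeasure (volume : Measure (AddCircle (1:ℝ))) :=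
  ⟨by rw [AddCircle.measure_univ]; simp⟩

lemma nu_prob (α β : ℝ) : IsProbabilityMeasure (nu α β) :=
  Measure.isProbabilityMeasure_map (Phi_meas α β).aemeasurable

lemma shift_meas : Measurable (shift : (ℤ → Fin 2) → (ℤ → Fin 2)) :=
  measurable_pi_lambda _ fun n => measurable_pi_apply (n + 1)

lemma shift_cont {A : Type*} [TopologicalSpace A] : Continuous (shift : (ℤ → A) → (ℤ → A)) :=
  continuous_pi fun n => continuous_apply (n + 1)

lemma denseRange_zsmul {α : ℝ} (hirr : Irrational α) :
    DenseRange (fun n : ℤ => n • (((α:ℝ)) : AddCircle (1:ℝ))) := by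
  show Dense (Set.range (fun n : ℤ => n • (((α:ℝ)) : AddCircle (1:ℝ))))
  rw [dense_iff_inter_open]
  intro U hU hUne
  obtain ⟨x, hx⟩ := hUne
  obtain ⟨ψ, rfl⟩ := QuotientAddGroup.mk_surjective x
  have hpre : IsOpen ((fun r : ℝ => ((r : ℝ) : AddCircle (1:ℝ))) ⁻¹' U) :=
    hU.preimage QuotientAddGroup.continuous_mk
  have hψmem : ψ ∈ (fun r : ℝ => ((r : ℝ) : AddCircle (1:ℝ))) ⁻¹' U := hx
  obtain ⟨δ, hδ0, hball⟩ := Metric.isOpen_iff.mp hpre ψ hψmem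
  obtain ⟨c, q, h1, h2⟩ := exists_in_Ioo hirr (show ψ - δ < ψ + δ by linarith)
  have hmem : ((c:ℝ) * α + q) ∈ (fun r : ℝ => ((r : ℝ) : AddCircle (1:ℝ))) ⁻¹' U := by
    apply hball
    rw [Real.ball_eq_Ioo]
    exact ⟨h1, h2⟩
  refine ⟨(((c:ℝ) * α + q : ℝ) : AddCircle (1:ℝ)), hmem, ⟨c, ?_⟩⟩
  have hq0 : (((q:ℝ) : ℝ) : AddCircle (1:ℝ)) = 0 := by
    rw [QuotientAddGroup.eq_zero_iff]
    exact AddSubgroup.mem_zmultiples_iff.mpr ⟨q, by simp⟩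
  calc c • (((α:ℝ)) : AddCircle (1:ℝ)) = (((c • α : ℝ)) : AddCircle (1:ℝ)) := by
        rw [← QuotientAddGroup.mk_zsmul]
  _ = (((c : ℝ) * α + q : ℝ) : AddCircle (1:ℝ)) := by
        rw [show ((c:ℝ) * α + q : ℝ) = (c • α : ℝ) + (q : ℝ) by rw [zsmul_eq_mul]]
        rw [QuotientAddGroup.mk_add, hq0, add_zero]

lemma rot_ergodic {α : ℝ} (hirr : Irrational α) :
    Ergodic (fun x : AddCircle (1:ℝ) => (((α:ℝ)) : AddCircle (1:ℝ)) + x) volume :=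
  ergodic_add_left_of_denseRange_zsmul (denseRange_zsmul hirr) volume

lemma nu_shift (α β : ℝ) : MeasurePreserving shift (nu α β) (nu α β) := by
  constructor
  · exact shift_meas
  · rw [nu, Measure.map_map shift_meas (Phi_meas α β)]
    have hcomp : (shift : (ℤ → Fin 2) → _) ∘ Phi α β
        = Phi α β ∘ (fun x : AddCircle (1:ℝ) => (((α:ℝ)) : AddCircle (1:ℝ)) + x) := by
      funext x
      exact (Phi_shift α β x).symm
    rw [hcomp, ← Measure.map_map (Phi_meas α β) (measurable_const_add _)]
    rw [(measurePreserving_add_left volume (((α:ℝ)) : AddCircle (1:ℝ))).map_eq]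

lemma nu_ergodic {α : ℝ} (β : ℝ) (hirr : Irrational α) : Ergodic shift (nu α β) := by
  refine ⟨nu_shift α β, ⟨fun s hs hinv => ?_⟩⟩
  rw [Filter.eventuallyConst_set']
  have hps : MeasurableSet (Phi α β ⁻¹' s) := Phi_meas α β hs
  have hpinv : (fun x : AddCircle (1:ℝ) => (((α:ℝ)) : AddCircle (1:ℝ)) + x) ⁻¹' (Phi α β ⁻¹' s)
      = Phi α β ⁻¹' s := by
    ext x
    simp only [Set.mem_preimage, Phi_shift]
    rw [← Set.mem_preimage (f := shift), hinv]
  have hmap : ∀ t : Set (ℤ → Fin 2), MeasurableSet t → nu α β t = volume (Phi α β ⁻¹' t) :=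
    fun t ht => Measure.map_apply (Phi_meas α β) ht
  rcases (rot_ergodic hirr).ae_empty_or_univ hps hpinv with h | h
  · left
    rw [ae_eq_empty, hmap s hs]
    exact ae_eq_empty.mp h
  · right
    rw [ae_eq_univ, hmap sᶜ hs.compl, Set.preimage_compl]
    exact ae_eq_univ.mp h

/-! ### Measure of arcs -/

lemma meas_arc {c g : ℝ} (hg0 : 0 ≤ g) (hg1 : g ≤ 1) {E : Set (AddCircle (1:ℝ))}
    (hE : MeasurableSet E) (h : ∀ ψ : ℝ, ψ ∈ Ioo c (c + g) → ((ψ : ℝ) : AddCircle (1:ℝ)) ∈ E) :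
    ENNReal.ofReal g ≤ volume E := by
  have h1 := (AddCircle.measurePreserving_mk 1 c).map_eq
  have h2 : volume E = volume.restrict (Ioc c (c + 1))
      ((fun ψ : ℝ => ((ψ : ℝ) : AddCircle (1:ℝ))) ⁻¹' E) := by
    rw [← h1, Measure.map_apply AddCircle.measurable_mk' hE]
  rw [h2]
  have h3 : Ioo c (c + g) ⊆ (fun ψ : ℝ => ((ψ : ℝ) : AddCircle (1:ℝ))) ⁻¹' E := fun ψ hψ => h ψ hψ
  calc ENNReal.ofReal g = volume (Ioo c (c + g)) := by rw [Real.volume_Ioo]; norm_num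
  _ = volume.restrict (Ioc c (c + 1)) (Ioo c (c + g)) := by
      rw [Measure.restrict_apply measurableSet_Ioo]
      congr 1
      refine (Set.inter_eq_left.mpr ?_).symm
      intro ψ hψ
      exact ⟨hψ.1, by rcases hψ with ⟨ha, hb⟩; linarith⟩
  _ ≤ volume.restrict (Ioc c (c + 1)) ((fun ψ : ℝ => ((ψ : ℝ) : AddCircle (1:ℝ))) ⁻¹' E) :=
      measure_mono h3

/-! ### `rotSubshift` is a subshift -/

/-- The inverse shift. -/
def ushift {A : Type*} (s : ℤ → A) : ℤ → A := fun n => s (n - 1)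

lemma ushift_cont {A : Type*} [TopologicalSpace A] :
    Continuous (ushift : (ℤ → A) → (ℤ → A)) :=
  continuous_pi fun n => continuous_apply (n - 1)

lemma ushift_shift {A : Type*} (s : ℤ → A) : ushift (shift s) = s := by
  funext n
  show s (n - 1 + 1) = s n
  congr 1
  ring

lemma shift_gen {α β : ℝ} {s : ℤ → Fin 2}
    (hs : s ∈ {s | ∃ θ ∈ Ico (0:ℝ) 1, s = rotCoding α β θ}) :
    shift s ∈ {s | ∃ θ ∈ Ico (0:ℝ) 1, s = rotCoding α β θ} := by
  obtain ⟨θ, _, rfl⟩ := hs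
  refine ⟨Int.fract (θ + α), ⟨Int.fract_nonneg _, Int.fract_lt_one _⟩, ?_⟩
  funext n
  show wc β (θ + ((n + 1 : ℤ):ℝ) * α) = wc β (Int.fract (θ + α) + (n:ℝ) * α)
  refine wc_congr β ?_
  rw [fract_shift]
  congr 1
  push_cast
  ring

lemma ushift_gen {α β : ℝ} {s : ℤ → Fin 2}
    (hs : s ∈ {s | ∃ θ ∈ Ico (0:ℝ) 1, s = rotCoding α β θ}) :
    ushift s ∈ {s | ∃ θ ∈ Ico (0:ℝ) 1, s = rotCoding α β θ} := by
  obtain ⟨θ, _, rfl⟩ := hs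
  refine ⟨Int.fract (θ - α), ⟨Int.fract_nonneg _, Int.fract_lt_one _⟩, ?_⟩
  funext n
  show wc β (θ + ((n - 1 : ℤ):ℝ) * α) = wc β (Int.fract (θ - α) + (n:ℝ) * α)
  refine wc_congr β ?_
  rw [fract_shift]
  congr 1
  push_cast
  ring

lemma isSubshift (α β : ℝ) : IsSubshift (rotSubshift α β) := by
  have key : ∀ f : (ℤ → Fin 2) → (ℤ → Fin 2), Continuous f →
      (∀ s ∈ {s | ∃ θ ∈ Ico (0:ℝ) 1, s = rotCoding α β θ},
        f s ∈ {s | ∃ θ ∈ Ico (0:ℝ) 1, s = rotCoding α β θ}) →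
      ∀ ω ∈ rotSubshift α β, f ω ∈ rotSubshift α β := by
    intro f hf hgen ω hω
    have h1 : f ω ∈ f '' (closure {s | ∃ θ ∈ Ico (0:ℝ) 1, s = rotCoding α β θ}) :=
      ⟨ω, hω, rfl⟩
    have h2 := image_closure_subset_closure_image hf h1
    refine closure_mono ?_ h2
    rintro x ⟨s, hs, rfl⟩
    exact hgen s hs
  refine ⟨⟨rotCoding α β 0, subset_closure ⟨0, ⟨le_refl 0, zero_lt_one⟩, rfl⟩⟩,
    isClosed_closure, ?_, ?_⟩
  · exact key shift shift_cont fun s hs => shift_gen hs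
  · intro ω hω
    have h1 : ushift (shift ω) ∈ rotSubshift α β :=
      key ushift ushift_cont (fun s hs => ushift_gen hs) (shift ω) hω
    rwa [ushift_shift] at h1

/-! ### Minimality -/

lemma minimal {α β : ℝ} {m k : ℤ} (hβm : β = Int.fract (m * α + k)) (hβ0 : 0 < β)
    (hβ1 : β < 1) (hirr : Irrational α) :
    ∀ ω ∈ rotSubshift α β, rotSubshift α β ⊆ closure (orbit ω) := by
  intro ω hω ω' hω'
  rw [mem_closure_windows]
  intro K
  obtain ⟨θ', hθ'⟩ := window_of_mem hω' K
  set F : Finset ℤ := Finset.Icc (-(K:ℤ)) (K:ℤ) with hF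
  have hFne : F.Nonempty := ⟨0, Finset.mem_Icc.mpr (by omega)⟩
  have hFB : ∀ j ∈ F, |j| ≤ ((K:ℕ):ℤ) := fun j hj => abs_le.mpr (Finset.mem_Icc.mp hj)
  have hNB : 2*((K:ℕ):ℤ) + 2*|m| ≤ (((2*K + 2*m.natAbs : ℕ)):ℤ) + 1 := by
    rw [Int.abs_eq_natAbs]
    push_cast
    omega
  obtain ⟨s, T, hs0, hT0, _, hstab⟩ :=
    stable_interval hβm hβ0 hβ1 hirr F hFne θ' (2*K + 2*m.natAbs) K hFB hNB
  obtain ⟨M, hM⟩ := exists_unif hirr θ' (min T 1) (lt_min hT0 one_pos) (min_le_right _ _)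
  obtain ⟨θ, hθ⟩ := window_of_mem hω (K + M)
  obtain ⟨c, hcM, hc⟩ := hM θ
  refine ⟨fun n => ω (n + c), ⟨c, rfl⟩, ?_⟩
  intro n hn
  show ω (n + c) = ω' n
  have h1 : |n + c| ≤ ((K + M : ℕ) : ℤ) := by
    calc |n + c| ≤ |n| + |c| := abs_add_le n c
    _ ≤ ((K + M : ℕ):ℤ) := by push_cast; exact add_le_add hn hcM
  have h2 : ω (n + c) = wc β (θ + ((n + c : ℤ):ℝ) * α) := hθ (n + c) h1
  set t := Int.fract (θ + c * α - θ') with htdef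
  obtain ⟨ht1, ht2⟩ := hc
  have h3 : θ + ((n + c : ℤ):ℝ) * α
      = (θ' + t + n * α) + ((⌊θ + (c:ℝ) * α - θ'⌋ : ℤ) : ℝ) := by
    rw [htdef, Int.fract]
    push_cast
    ring
  have h4 : wc β (θ + ((n + c : ℤ):ℝ) * α) = wc β (θ' + t + n * α) := by
    rw [h3, wc_int]
  have h5 : wc β (θ' + t + n * α) = wc β (θ' + n * α) :=
    hstab t (by linarith) (lt_of_lt_of_le ht2 (min_le_left _ _)) n
      (Finset.mem_Icc.mpr (abs_le.mp hn))
  rw [h2, h4, h5]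
  exact (hθ' n hn).symm

/-! ### The main theorem -/

set_option maxHeartbeats 1000000 in
theorem main (α : ℝ) (hα : α ∈ Set.Ioo (0 : ℝ) 1) (hirr : Irrational α)
    (β : ℝ) (hβ : β ∈ Set.Ioo (0 : ℝ) 1)
    (h : ∃ m n : ℤ, β = Int.fract (m * α + n)) :
    Boshernitzan (rotSubshift α β) := by
  classical
  obtain ⟨m, num, hβm⟩ := h
  obtain ⟨hβ0, hβ1⟩ := hβ
  haveI : IsProbabilityMeasure (nu α β) := nu_prob α β
  constructor
  · exact ⟨isSubshift α β, minimal hβm hβ0 hβ1 hirr⟩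
  refine ⟨nu α β, nu_prob α β, nu_ergodic β hirr, ?_, ?_⟩
  · -- null outside Ω
    have hm : MeasurableSet (rotSubshift α β)ᶜ := isClosed_closure.measurableSet.compl
    rw [nu, Measure.map_apply (Phi_meas α β) hm]
    have hpre : (Phi α β) ⁻¹' (rotSubshift α β)ᶜ = ∅ := by
      ext x
      simp only [Set.mem_preimage, Set.mem_compl_iff, Set.mem_empty_iff_false, iff_false, not_not]
      exact Phi_mem α β x
    rw [hpre, measure_empty]
  · -- the word bound
    set μn : ℕ := m.natAbs with hμ
    have hdio : ∀ n : ℕ, ∃ N : ℕ, 4*μn + 2*n + 4 ≤ N ∧ 1/(2*((N:ℝ)+2)) ≤ eps α N := by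
      intro n
      obtain ⟨N, h1, h2⟩ := dioph hirr (4*μn + 2*n + 4)
      exact ⟨N, h1, h2⟩
    choose NN hNN1 hNN2 using hdio
    refine ⟨1/16, by norm_num, fun n => (NN n + 1 - 2*μn)/2, ?_, ?_⟩
    · refine tendsto_atTop_mono (fun n => ?_) tendsto_id
      have := hNN1 n
      simp only [id_eq]
      omega
    · rintro w hw ⟨n, hn⟩
      obtain ⟨hwne, ω, hω, kk, hwk⟩ := hw
      set L : ℕ := w.length with hL
      set N : ℕ := NN n with hNdef
      have hNlarge : 4*μn + 2*n + 4 ≤ N := hNN1 n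
      have hLval : L = (N + 1 - 2*μn)/2 := hn
      have hL1 : 1 ≤ L := by omega
      have hLb1 : 2*L + 2*μn ≤ N + 1 := by omega
      have hLb2 : N ≤ 2*L + 2*μn := by omega
      -- window data
      obtain ⟨θ, hθ⟩ := window_of_mem hω (kk.natAbs + L)
      set θ₀ : ℝ := θ + ((kk:ℝ) - 1) * α with hθ₀
      set F : Finset ℤ := Finset.Icc (1:ℤ) (L:ℤ) with hF
      have hFne : F.Nonempty := ⟨1, Finset.mem_Icc.mpr (by omega)⟩
      have hFB : ∀ j ∈ F, |j| ≤ ((L:ℕ):ℤ) := fun j hj => by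
        have := Finset.mem_Icc.mp hj
        exact abs_le.mpr ⟨by omega, by omega⟩
      have hNB : 2*((L:ℕ):ℤ) + 2*|m| ≤ ((N:ℕ):ℤ) + 1 := by
        have habs : |m| = ((μn:ℕ):ℤ) := by rw [hμ]; exact Int.abs_eq_natAbs m
        omega
      obtain ⟨s, T, hs0, hT0, hlen, hstab⟩ :=
        stable_interval hβm hβ0 hβ1 hirr F hFne θ₀ N L hFB hNB
      set g : ℝ := min (s + T) 1 with hg
      have hg0 : 0 ≤ g := le_min (by linarith) zero_le_one
      have hg1 : g ≤ 1 := min_le_right _ _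
      -- membership of the arc in the cylinder
      have harc : ∀ ψ : ℝ, ψ ∈ Ioo (θ₀ - s) (θ₀ - s + g) →
          ((ψ : ℝ) : AddCircle (1:ℝ)) ∈ (Phi α β) ⁻¹' (Cyl (rotSubshift α β) w) := by
        intro ψ hψ
        obtain ⟨hψ1, hψ2⟩ := hψ
        have htlow : -s < ψ - θ₀ := by linarith
        have hthigh : ψ - θ₀ < T := by
          have := min_le_left (s + T) 1
          have : g ≤ s + T := min_le_left _ _
          linarith
        refine ⟨Phi_mem α β _, ?_⟩
        intro i
        have hiL : ((i:ℕ):ℤ) < (L:ℤ) := by exact_mod_cast i.isLt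
        have hmemF : 1 + ((i:ℕ):ℤ) ∈ F := Finset.mem_Icc.mpr ⟨by omega, by omega⟩
        have e1 : Phi α β ((ψ : ℝ) : AddCircle (1:ℝ)) (1 + ((i:ℕ):ℤ))
            = wc β (ψ + ((1 + ((i:ℕ):ℤ) : ℤ):ℝ) * α) := Phi_coe α β ψ _
        have e2 : ψ + ((1 + ((i:ℕ):ℤ) : ℤ):ℝ) * α
            = θ₀ + (ψ - θ₀) + ((1 + ((i:ℕ):ℤ) : ℤ):ℝ) * α := by ring
        have e3 : wc β (θ₀ + (ψ - θ₀) + ((1 + ((i:ℕ):ℤ) : ℤ):ℝ) * α)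
            = wc β (θ₀ + ((1 + ((i:ℕ):ℤ) : ℤ):ℝ) * α) :=
          hstab (ψ - θ₀) htlow hthigh _ hmemF
        have e4 : θ₀ + ((1 + ((i:ℕ):ℤ) : ℤ):ℝ) * α = θ + ((kk + ((i:ℕ):ℤ) : ℤ):ℝ) * α := by
          rw [hθ₀]
          push_cast
          ring
        have hbound : |kk + ((i:ℕ):ℤ)| ≤ ((kk.natAbs + L : ℕ):ℤ) := by
          calc |kk + ((i:ℕ):ℤ)| ≤ |kk| + |((i:ℕ):ℤ)| := abs_add_le _ _
          _ ≤ ((kk.natAbs + L : ℕ):ℤ) := by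
              rw [Int.abs_eq_natAbs, abs_of_nonneg (by positivity : (0:ℤ) ≤ ((i:ℕ):ℤ))]
              push_cast
              omega
        have e5 : ω (kk + ((i:ℕ):ℤ)) = wc β (θ + ((kk + ((i:ℕ):ℤ) : ℤ):ℝ) * α) :=
          hθ _ hbound
        show Phi α β ((ψ : ℝ) : AddCircle (1:ℝ)) (1 + ((i:ℕ):ℤ)) = w.get i
        rw [e1, e2, e3, e4, ← e5]
        exact (hwk i).symm
      -- measurability of the cylinder
      have hCylm : MeasurableSet (Cyl (rotSubshift α β) w) := by
        have hrepr : Cyl (rotSubshift α β) w = rotSubshift α β ∩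
            ⋂ i : Fin w.length, {ωω : ℤ → Fin 2 | ωω (1 + ((i:ℕ):ℤ)) = w.get i} := by
          ext ωω
          simp only [Cyl, Set.mem_sep_iff, Set.mem_inter_iff, Set.mem_iInter, Set.mem_setOf_eq]
        rw [hrepr]
        exact isClosed_closure.measurableSet.inter (MeasurableSet.iInter fun i =>
          (measurable_pi_apply _) (measurableSet_singleton _))
      -- measure lower bound
      have hmeas : ENNReal.ofReal g ≤ nu α β (Cyl (rotSubshift α β) w) := by
        rw [nu, Measure.map_apply (Phi_meas α β) hCylm]
        exact meas_arc hg0 hg1 (Phi_meas α β hCylm) harc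
      have htoReal : g ≤ (nu α β (Cyl (rotSubshift α β) w)).toReal :=
        (ENNReal.ofReal_le_iff_le_toReal (measure_ne_top _ _)).mp hmeas
      have hepsg : eps α N ≤ g := le_min hlen (eps_le_one α N)
      have heps : eps α N ≤ (nu α β (Cyl (rotSubshift α β) w)).toReal :=
        le_trans hepsg htoReal
      -- numerical estimate
      have hLreal : ((N:ℝ) - 2*(μn:ℝ)) / 2 ≤ (L:ℝ) := by
        have : (N:ℝ) ≤ 2*(L:ℝ) + 2*(μn:ℝ) := by exact_mod_cast hLb2
        linarith
      have hNge : (4*(μn:ℝ) + 4 : ℝ) ≤ (N:ℝ) := by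
        have : 4*μn + 4 ≤ N := by omega
        exact_mod_cast this
      have hepsN : 1/(2*((N:ℝ)+2)) ≤ eps α N := hNN2 n
      have hmain : (1:ℝ)/16 ≤ (L:ℝ) * eps α N := by
        have hstep1 : (1:ℝ)/16 ≤ ((N:ℝ) - 2*(μn:ℝ))/2 * (1/(2*((N:ℝ)+2))) := by
          rw [div_mul_div_comm, mul_one, div_le_div_iff₀ (by norm_num) (by positivity)]
          have hμnn : (0:ℝ) ≤ (μn:ℝ) := by positivity
          nlinarith
        calc (1:ℝ)/16 ≤ ((N:ℝ) - 2*(μn:ℝ))/2 * (1/(2*((N:ℝ)+2))) := hstep1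
        _ ≤ (L:ℝ) * (1/(2*((N:ℝ)+2))) :=
            mul_le_mul_of_nonneg_right hLreal (by positivity)
        _ ≤ (L:ℝ) * eps α N := mul_le_mul_of_nonneg_left hepsN (by positivity)
      calc (1:ℝ)/16 ≤ (L:ℝ) * eps α N := hmain
      _ ≤ (L:ℝ) * (nu α β (Cyl (rotSubshift α β) w)).toReal :=
          mul_le_mul_of_nonneg_left heps (by positivity)

end RotBosh

/-- if `β = mα + n mod 1` for integers `m, n`, then the coding
subshift `Ω_{α,β}` satisfies the Boshernitzan condition. -/
theorem rotSubshift_boshernitzan_of_beta_in_alpha_orbit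
    (α : ℝ) (hα : α ∈ Set.Ioo (0 : ℝ) 1) (hirr : Irrational α)
    (β : ℝ) (hβ : β ∈ Set.Ioo (0 : ℝ) 1)
    (h : ∃ m n : ℤ, β = Int.fract (m * α + n)) :
    Boshernitzan (rotSubshift α β) :=
  RotBosh.main α hα hirr β hβ h

end
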